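/- In a binary protocol with affine sends, no mixed transitions and no self-messaging, every reachable mailbox of process i can be written as a strictly increasing subsequence of the singleton incoming-message sets: mᵢ = ⟨I^{x₁}ᵢ, …, I^{xᵧ}ᵢ⟩ with x₁ < x₂ < … < xᵧ and each |I^{xⱼ}ᵢ| = 1. -/

import Mathlib

/-- A Communicating Actor Automaton (CAA): initial state, final states,
receive transitions (on patterns), send transitions (to a variable, with a term),
and a per-state order on receive patterns. -/
structure Machine (σ Val Pat Var Tm : Type) where
  init : σ
  final : σ → Prop
  recvT : σ → Pat → Option σ
  sendT : σ → Var → Tm → Option σ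
  lt : σ → Pat → Pat → Prop

/-- A local state: automaton state, mailbox (list of values), environment. -/
structure Local (σ Val Var : Type) where
  st : σ
  mbox : List Val
  env : Var → Option Val

variable {σ Val Pat Var Tm : Type}

/-- Erlang-style `pick`: `pat`/`γ` is picked for value `v` after mailbox prefix `m`
iff no value in `m` unifies with any receivable pattern at `s`, `v` fails every
receivable pattern `<ₛ pat`, `pat` is receivable, and `v ⊳ pat = γ`. -/
def Pick (M : Machine σ Val Pat Var Tm) (unify : Val → Pat → Option (Var → Option Val))
    (s : σ) (m : List Val) (v : Val) (pat : Pat) (γ : Var → Option Val) : Prop :=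
  (∀ pat', (M.recvT s pat').isSome → ∀ v' ∈ m, unify v' pat' = none) ∧
  (∀ pat', (M.recvT s pat').isSome → M.lt s pat' pat → unify v pat' = none) ∧
  (M.recvT s pat).isSome ∧ unify v pat = some γ

/-- Domain-extending union of environments: old bindings kept, new ones added. -/
def envUnion (γ γ' : Var → Option Val) : Var → Option Val :=
  fun x => (γ x).orElse (fun _ => γ' x)

/-- The (SEND) rule: process `i` sends to process `j`. -/
def SendStep (Ms : List (Machine σ Val Pat Var Tm))
    (eval : (Var → Option Val) → Tm → Val) (pid : Val → Option ℕ)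
    (i j : ℕ) (G G' : List (Local σ Val Var)) : Prop :=
  ∃ Mi Li Lj P t si' pv,
    Ms[i]? = some Mi ∧ G[i]? = some Li ∧
    Mi.sendT Li.st P t = some si' ∧
    Li.env P = some pv ∧ pid pv = some j ∧
    (G.set i { Li with st := si' })[j]? = some Lj ∧
    G' = (G.set i { Li with st := si' }).set j
      { Lj with mbox := Lj.mbox ++ [eval Li.env t] }

/-- The (RECV) rule: process `j` receives a message from its mailbox. -/
def RecvStep (Ms : List (Machine σ Val Pat Var Tm))
    (unify : Val → Pat → Option (Var → Option Val))
    (j : ℕ) (G G' : List (Local σ Val Var)) : Prop :=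
  ∃ Mj Lj pat sj' m v m' γ,
    Ms[j]? = some Mj ∧ G[j]? = some Lj ∧
    Mj.recvT Lj.st pat = some sj' ∧
    Lj.mbox = m ++ v :: m' ∧
    Pick Mj unify Lj.st m v pat γ ∧
    G' = G.set j ⟨sj', m ++ m', envUnion Lj.env γ⟩

/-- The step relation of a protocol: either a (SEND) or a (RECV). -/
def Step (Ms : List (Machine σ Val Pat Var Tm))
    (eval : (Var → Option Val) → Tm → Val) (pid : Val → Option ℕ)
    (unify : Val → Pat → Option (Var → Option Val))
    (G G' : List (Local σ Val Var)) : Prop :=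
  (∃ i j, SendStep Ms eval pid i j G G') ∨ (∃ j, RecvStep Ms unify j G G')

/-- The initial global state: each process in its initial state with empty
mailbox and empty environment. -/
def initG (Ms : List (Machine σ Val Pat Var Tm)) : List (Local σ Val Var) :=
  Ms.map (fun M => ⟨M.init, [], fun _ => none⟩)

/-- Affine sends: each state has at most one send transition. -/
def AffineSends (M : Machine σ Val Pat Var Tm) : Prop :=
  ∀ s P t s' P' t' s'', M.sendT s P t = some s' → M.sendT s P' t' = some s'' →
    P = P' ∧ t = t' ∧ s' = s''

/-- No mixed transitions: a state with a send transition has no receive transitions. -/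
def NoMixed (M : Machine σ Val Pat Var Tm) : Prop :=
  ∀ s P t s', M.sendT s P t = some s' → ∀ pat, M.recvT s pat = none

/-- No self-messaging at a configuration: no process's enabled send targets itself. -/
def NoSelfMsg (Ms : List (Machine σ Val Pat Var Tm)) (pid : Val → Option ℕ)
    (G : List (Local σ Val Var)) : Prop :=
  ∀ i Mi Li, Ms[i]? = some Mi → G[i]? = some Li →
    ∀ P t s' pv, Mi.sendT Li.st P t = some s' → Li.env P = some pv → pid pv ≠ some i

/-- A trace: starts at the initial global state, consecutive configurations are
related by `Step`, and the last configuration has no successor. -/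
def IsTrace (Ms : List (Machine σ Val Pat Var Tm))
    (eval : (Var → Option Val) → Tm → Val) (pid : Val → Option ℕ)
    (unify : Val → Pat → Option (Var → Option Val))
    (T : List (List (Local σ Val Var))) : Prop :=
  T[0]? = some (initG Ms) ∧
  (∀ k G G', T[k]? = some G → T[k + 1]? = some G' → Step Ms eval pid unify G G') ∧
  (∀ G, T.getLast? = some G → ∀ G', ¬ Step Ms eval pid unify G G')

/-- Incoming messages of process `i` at configuration `G`: messages that can be
appended to `i`'s mailbox in one step. -/
def IncomingG (Ms : List (Machine σ Val Pat Var Tm))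
    (eval : (Var → Option Val) → Tm → Val) (pid : Val → Option ℕ)
    (unify : Val → Pat → Option (Var → Option Val))
    (G : List (Local σ Val Var)) (i : ℕ) : Set Val :=
  {v | ∃ G' Li Li', Step Ms eval pid unify G G' ∧ G[i]? = some Li ∧
    G'[i]? = some Li' ∧ Li'.mbox = Li.mbox ++ [v]}

/-- `Iᵢˣ`: incoming messages for process `i` at position `x` of trace `T`. -/
def Incoming (Ms : List (Machine σ Val Pat Var Tm))
    (eval : (Var → Option Val) → Tm → Val) (pid : Val → Option ℕ)
    (unify : Val → Pat → Option (Var → Option Val))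
    (T : List (List (Local σ Val Var))) (x i : ℕ) : Set Val :=
  {v | ∃ G, T[x]? = some G ∧ v ∈ IncomingG Ms eval pid unify G i}

/-- `δ(s, ?I)`: successor states reachable by receiving some message in `I`. -/
def succStates (M : Machine σ Val Pat Var Tm)
    (unify : Val → Pat → Option (Var → Option Val)) (s : σ) (I : Set Val) : Set σ :=
  {s' | ∃ v ∈ I, ∃ pat, (unify v pat).isSome ∧ M.recvT s pat = some s'}

/-- Total number of messages over all mailboxes. -/
def totalMsgs (G : List (Local σ Val Var)) : ℕ :=
  (G.map (fun L => L.mbox.length)).sum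


section AuxProof

variable {Ms : List (Machine σ Val Pat Var Tm)}
  {eval : (Var → Option Val) → Tm → Val} {pid : Val → Option ℕ}
  {unify : Val → Pat → Option (Var → Option Val)}

lemma step_length {G G' : List (Local σ Val Var)}
    (h : Step Ms eval pid unify G G') : G'.length = G.length := by
  rcases h with ⟨i, j, ⟨Mi, Li, Lj, P, t, si', pv, _, _, _, _, _, _, hG'⟩⟩ |
    ⟨j, ⟨Mj, Lj, pat, sj', m, v, m', γ, _, _, _, _, _, hG'⟩⟩ <;> subst hG' <;> simp

lemma mem_of_getElem?' {α : Type*} {l : List α} {a : α} {i : ℕ} (h : l[i]? = some a) : a ∈ l := by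
  obtain ⟨h1, rfl⟩ := List.getElem?_eq_some_iff.mp h; exact List.getElem_mem h1

lemma mbox_change {G G' : List (Local σ Val Var)} {i : ℕ} {Li Li' : Local σ Val Var}
    (h : Step Ms eval pid unify G G') (hi : G[i]? = some Li) (hi' : G'[i]? = some Li') :
    Li'.mbox = Li.mbox ∨ (∃ v, Li'.mbox = Li.mbox ++ [v]) ∨
      (∃ m w m', Li.mbox = m ++ w :: m' ∧ Li'.mbox = m ++ m') := by
  rcases h with ⟨i0, j0, ⟨Mi0, Li0, Lj0, P, t, si', pv, hM, hL, hs, he, hp, hj, hG'⟩⟩ |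
    ⟨j, ⟨Mj, Lj, pat, sj', m, v, m', γ, hM, hL, hr, hmb, hpick, hG'⟩⟩
  · subst hG'
    have hi0len : i0 < G.length := (List.getElem?_eq_some_iff.mp hL).1
    by_cases hji : j0 = i
    · subst hji
      have hjlen : j0 < (G.set i0 { Li0 with st := si' }).length :=
        (List.getElem?_eq_some_iff.mp hj).1
      rw [List.getElem?_set_self hjlen] at hi'
      obtain rfl : _ = Li' := Option.some.inj hi'
      by_cases hii : i0 = j0
      · subst hii
        rw [List.getElem?_set_self hi0len] at hj
        obtain rfl : _ = Lj0 := Option.some.inj hj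
        rw [hL] at hi
        obtain rfl : Li0 = Li := Option.some.inj hi
        exact Or.inr (Or.inl ⟨_, rfl⟩)
      · rw [List.getElem?_set_ne hii, hi] at hj
        obtain rfl : Li = Lj0 := Option.some.inj hj
        exact Or.inr (Or.inl ⟨_, rfl⟩)
    · rw [List.getElem?_set_ne hji] at hi'
      by_cases hii : i0 = i
      · subst hii
        rw [List.getElem?_set_self hi0len] at hi'
        obtain rfl : _ = Li' := Option.some.inj hi'
        rw [hL] at hi
        obtain rfl : Li0 = Li := Option.some.inj hi
        exact Or.inl rfl
      · rw [List.getElem?_set_ne hii, hi] at hi'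
        obtain rfl : Li = Li' := Option.some.inj hi'
        exact Or.inl rfl
  · subst hG'
    by_cases hji : j = i
    · subst hji
      have hjlen : j < G.length := (List.getElem?_eq_some_iff.mp hL).1
      rw [List.getElem?_set_self hjlen] at hi'
      obtain rfl : _ = Li' := Option.some.inj hi'
      rw [hL] at hi
      obtain rfl : Lj = Li := Option.some.inj hi
      exact Or.inr (Or.inr ⟨m, v, m', hmb, rfl⟩)
    · rw [List.getElem?_set_ne hji, hi] at hi'
      obtain rfl : Li = Li' := Option.some.inj hi'
      exact Or.inl rfl

lemma incoming_char {G : List (Local σ Val Var)} {i : ℕ} {Li : Local σ Val Var} {v : Val}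
    (hns : NoSelfMsg Ms pid G) (hi : G[i]? = some Li)
    (hv : v ∈ IncomingG Ms eval pid unify G i) :
    ∃ i0 Mi0 Li0 P t si' pv, i0 ≠ i ∧ Ms[i0]? = some Mi0 ∧ G[i0]? = some Li0 ∧
      Mi0.sendT Li0.st P t = some si' ∧ Li0.env P = some pv ∧ pid pv = some i ∧
      v = eval Li0.env t := by
  obtain ⟨G', Li1, Li1', hstep, hi1, hi1', happ⟩ := hv
  rw [hi] at hi1
  obtain rfl : Li = Li1 := Option.some.inj hi1
  rcases hstep with ⟨i0, j0, ⟨Mi0, Li0, Lj0, P, t, si', pv, hM, hL, hs, he, hp, hj, hG'⟩⟩ |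
    ⟨j, ⟨Mj, Lj, pat, sj', m, w, m', γ, hM, hL, hr, hmb, hpick, hG'⟩⟩
  · subst hG'
    have hi0len : i0 < G.length := (List.getElem?_eq_some_iff.mp hL).1
    by_cases hji : j0 = i
    · subst hji
      have hjlen : j0 < (G.set i0 { Li0 with st := si' }).length :=
        (List.getElem?_eq_some_iff.mp hj).1
      rw [List.getElem?_set_self hjlen] at hi1'
      obtain rfl : _ = Li1' := Option.some.inj hi1'
      by_cases hii : i0 = j0
      · exact absurd (hp.trans (congrArg some hii.symm))
          (hns i0 Mi0 Li0 hM hL P t si' pv hs he)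
      · rw [List.getElem?_set_ne hii, hi] at hj
        obtain rfl : Li = Lj0 := Option.some.inj hj
        have : v = eval Li0.env t := by
          have h2 := List.append_cancel_left happ.symm
          exact (List.cons.injEq _ _ _ _ ▸ h2).1
        exact ⟨i0, Mi0, Li0, P, t, si', pv, hii, hM, hL, hs, he, hp, this⟩
    · exfalso
      rw [List.getElem?_set_ne hji] at hi1'
      by_cases hii : i0 = i
      · subst hii
        rw [List.getElem?_set_self hi0len] at hi1'
        obtain rfl : _ = Li1' := Option.some.inj hi1'
        rw [hL] at hi
        obtain rfl : Li0 = Li := Option.some.inj hi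
        have := congrArg List.length happ
        simp at this
      · rw [List.getElem?_set_ne hii, hi] at hi1'
        obtain rfl : Li = Li1' := Option.some.inj hi1'
        have := congrArg List.length happ
        simp at this
  · exfalso
    subst hG'
    by_cases hji : j = i
    · subst hji
      have hjlen : j < G.length := (List.getElem?_eq_some_iff.mp hL).1
      rw [List.getElem?_set_self hjlen] at hi1'
      obtain rfl : _ = Li1' := Option.some.inj hi1'
      rw [hL] at hi
      obtain rfl : Lj = Li := Option.some.inj hi
      have := congrArg List.length happ
      rw [hmb] at this
      simp at this
      omega
    · rw [List.getElem?_set_ne hji, hi] at hi1'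
      obtain rfl : Li = Li1' := Option.some.inj hi1'
      have := congrArg List.length happ
      simp at this

lemma incoming_subsingleton {G : List (Local σ Val Var)} {i : ℕ} {Li : Local σ Val Var}
    (hbin : Ms.length = 2) (haff : ∀ M ∈ Ms, AffineSends M)
    (hns : NoSelfMsg Ms pid G) (hlen : G.length = Ms.length)
    (hi : G[i]? = some Li) {v1 v2 : Val}
    (h1 : v1 ∈ IncomingG Ms eval pid unify G i)
    (h2 : v2 ∈ IncomingG Ms eval pid unify G i) : v1 = v2 := by
  obtain ⟨a, Ma, La, P1, t1, s1, pv1, ha, hMa, hLa, hs1, he1, hp1, hv1⟩ :=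
    incoming_char hns hi h1
  obtain ⟨b, Mb, Lb, P2, t2, s2, pv2, hb, hMb, hLb, hs2, he2, hp2, hv2⟩ :=
    incoming_char hns hi h2
  have hilt : i < G.length := (List.getElem?_eq_some_iff.mp hi).1
  have halt : a < Ms.length := (List.getElem?_eq_some_iff.mp hMa).1
  have hblt : b < Ms.length := (List.getElem?_eq_some_iff.mp hMb).1
  have hab : a = b := by omega
  subst hab
  rw [hMa] at hMb
  obtain rfl : Ma = Mb := Option.some.inj hMb
  rw [hLa] at hLb
  obtain rfl : La = Lb := Option.some.inj hLb
  obtain ⟨hP, ht, -⟩ := haff Ma (mem_of_getElem?' hMa) La.st P1 t1 s1 P2 t2 s2 hs1 hs2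
  subst ht
  rw [hv1, hv2]

lemma trace_reach {T : List (List (Local σ Val Var))}
    (hT : IsTrace Ms eval pid unify T) :
    ∀ (x : ℕ) (G : List (Local σ Val Var)), T[x]? = some G →
      Relation.ReflTransGen (Step Ms eval pid unify) (initG Ms) G ∧
        G.length = Ms.length := by
  intro x
  induction x with
  | zero =>
    intro G h
    rw [hT.1] at h
    obtain rfl : initG Ms = G := Option.some.inj h
    exact ⟨Relation.ReflTransGen.refl, by simp [initG]⟩
  | succ x ih =>
    intro G h
    have hlt : x + 1 < T.length := (List.getElem?_eq_some_iff.mp h).1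
    have hlt' : x < T.length := by omega
    have hx : T[x]? = some (T[x]'hlt') := List.getElem?_eq_getElem hlt'
    obtain ⟨hr, hl⟩ := ih _ hx
    have hst := hT.2.1 x _ _ hx h
    exact ⟨hr.tail hst, (step_length hst).trans hl⟩

lemma forall₂_left_mem {α β : Type*} {R : α → β → Prop} {l1 : List α} {l2 : List β}
    (h : List.Forall₂ R l1 l2) : ∀ a ∈ l1, ∃ b, R a b := by
  induction h with
  | nil => simp
  | cons hr _ ih =>
    intro a ha
    rcases List.mem_cons.mp ha with rfl | ha
    · exact ⟨_, hr⟩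
    · exact ih a ha

lemma key_induction {T : List (List (Local σ Val Var))}
    (hbin : Ms.length = 2) (haff : ∀ M ∈ Ms, AffineSends M)
    (hself : ∀ G, Relation.ReflTransGen (Step Ms eval pid unify) (initG Ms) G →
      NoSelfMsg Ms pid G)
    (hT : IsTrace Ms eval pid unify T) (i : ℕ) :
    ∀ (x : ℕ) (G : List (Local σ Val Var)) (Li : Local σ Val Var),
      T[x]? = some G → G[i]? = some Li →
      ∃ idxs : List ℕ, idxs.Chain' (· < ·) ∧
        List.Forall₂ (fun y v => y < x ∧
          Incoming Ms eval pid unify T y i = ({v} : Set Val)) idxs Li.mbox := by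
  intro x
  induction x with
  | zero =>
    intro G Li hx hi
    rw [hT.1] at hx
    obtain rfl : initG Ms = G := Option.some.inj hx
    have hmb : Li.mbox = [] := by
      unfold initG at hi
      rw [List.getElem?_map] at hi
      obtain ⟨M, hM, hLi⟩ := Option.map_eq_some_iff.mp hi
      rw [← hLi]
    refine ⟨[], List.isChain_nil, ?_⟩
    rw [hmb]
    exact List.Forall₂.nil
  | succ x ih =>
    intro G' Li' hx' hi'
    have hlt : x + 1 < T.length := (List.getElem?_eq_some_iff.mp hx').1
    have hlt' : x < T.length := by omega
    have hx : T[x]? = some (T[x]'hlt') := List.getElem?_eq_getElem hlt'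
    set G := T[x]'hlt' with hGdef
    have hstep := hT.2.1 x _ _ hx hx'
    have hlG : G.length = G'.length := (step_length hstep).symm
    have hilt : i < G.length := by
      have := (List.getElem?_eq_some_iff.mp hi').1; omega
    have hi : G[i]? = some (G[i]'hilt) := List.getElem?_eq_getElem hilt
    obtain ⟨idxs, hch, hf⟩ := ih G (G[i]'hilt) hx hi
    rcases mbox_change hstep hi hi' with heq | ⟨v, happ⟩ | ⟨m, w, m', hm, hm'⟩
    · refine ⟨idxs, hch, ?_⟩
      rw [heq]
      exact hf.imp (fun a b hab => ⟨by omega, hab.2⟩)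
    · obtain ⟨hreach, hGlen⟩ := trace_reach hT x G hx
      have hns := hself G hreach
      have hvmem : v ∈ IncomingG Ms eval pid unify G i :=
        ⟨G', G[i]'hilt, Li', hstep, hi, hi', happ⟩
      have hIx : Incoming Ms eval pid unify T x i = ({v} : Set Val) := by
        ext u
        simp only [Incoming, Set.mem_setOf_eq, Set.mem_singleton_iff]
        constructor
        · rintro ⟨G0, hG0, hu⟩
          rw [hx] at hG0
          obtain rfl : G = G0 := Option.some.inj hG0
          exact incoming_subsingleton hbin haff hns hGlen hi hu hvmem
        · rintro rfl
          exact ⟨G, hx, hvmem⟩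
      refine ⟨idxs ++ [x], ?_, ?_⟩
      · show List.IsChain _ _
        rw [List.isChain_append]
        refine ⟨hch, List.isChain_singleton x, ?_⟩
        intro a ha b hb
        simp only [List.head?_cons, Option.mem_def, Option.some.injEq] at hb
        subst hb
        obtain ⟨h, rfl⟩ := List.mem_getLast?_eq_getLast ha
        obtain ⟨bb, hbb⟩ := forall₂_left_mem hf _ (List.getLast_mem h)
        exact hbb.1
      · rw [happ]
        exact List.rel_append (hf.imp (fun a b hab => ⟨by omega, hab.2⟩))
          (List.forall₂_cons.mpr ⟨⟨by omega, hIx⟩, List.Forall₂.nil⟩)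
    · have hf' := hf
      rw [hm] at hf'
      have h1 := List.forall₂_take_append idxs m (w :: m') hf'
      have h2 := List.forall₂_drop_append idxs m (w :: m') hf'
      rcases hd : idxs.drop m.length with _ | ⟨y, b'⟩
      · rw [hd] at h2; cases h2
      · rw [hd] at h2
        rw [List.forall₂_cons] at h2
        refine ⟨idxs.take m.length ++ b', ?_, ?_⟩
        · refine hch.sublist ?_
          have hidxs : idxs = idxs.take m.length ++ y :: b' := by
            rw [← hd, List.take_append_drop]
          have hsub : (idxs.take m.length ++ b').Sublist
              (idxs.take m.length ++ y :: b') :=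
            (List.sublist_cons_self y b').append_left _
          rw [← hidxs] at hsub
          exact hsub
        · rw [hm']
          exact List.rel_append (h1.imp (fun a b hab => ⟨by omega, hab.2⟩))
            (h2.2.imp (fun a b hab => ⟨by omega, hab.2⟩))

end AuxProof

/-- in a binary protocol with affine sends, no mixed transitions
and no self-messaging, every reachable mailbox of process `i` is given by a
strictly increasing sequence of step indices whose incoming-message sets are
singletons. -/
theorem mailbox_singleton_incoming (Ms : List (Machine σ Val Pat Var Tm))
    (eval : (Var → Option Val) → Tm → Val) (pid : Val → Option ℕ)
    (unify : Val → Pat → Option (Var → Option Val))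
    (hbin : Ms.length = 2)
    (hmix : ∀ M ∈ Ms, NoMixed M) (haff : ∀ M ∈ Ms, AffineSends M)
    (hself : ∀ G, Relation.ReflTransGen (Step Ms eval pid unify) (initG Ms) G →
      NoSelfMsg Ms pid G)
    (T : List (List (Local σ Val Var))) (hT : IsTrace Ms eval pid unify T)
    (x i : ℕ) (G : List (Local σ Val Var)) (Li : Local σ Val Var)
    (hx : T[x]? = some G) (hi : G[i]? = some Li) :
    ∃ idxs : List ℕ, idxs.Chain' (· < ·) ∧ idxs.length = Li.mbox.length ∧
      (∀ y ∈ idxs, y < x) ∧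
      ∀ (k : ℕ) (v : Val), Li.mbox[k]? = some v → ∃ xk : ℕ, idxs[k]? = some xk ∧
        Incoming Ms eval pid unify T xk i = ({v} : Set Val) := by
  obtain ⟨idxs, hch, hf⟩ := key_induction hbin haff hself hT i x G Li hx hi
  refine ⟨idxs, hch, hf.length_eq, ?_, ?_⟩
  · intro y hy
    obtain ⟨b, hb⟩ := forall₂_left_mem hf y hy
    exact hb.1
  · intro k v hk
    have hklt : k < Li.mbox.length := (List.getElem?_eq_some_iff.mp hk).1
    have hklt' : k < idxs.length := by rw [hf.length_eq]; exact hklt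
    have hrel := (List.forall₂_iff_get.mp hf).2 k hklt' hklt
    have hv : Li.mbox.get ⟨k, hklt⟩ = v := by
      obtain ⟨h, hv⟩ := List.getElem?_eq_some_iff.mp hk
      simpa using hv
    refine ⟨idxs.get ⟨k, hklt'⟩, by simp [List.getElem?_eq_getElem hklt'], ?_⟩
    rw [← hv]
    exact hrel.2
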